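/- For Model 1 in dimension d = 1, assume the negative-part tail P(X_e^- > x) = e^{−x²f(x)} for x ≥ M₀ with f positive and increasing, and assume Σ_{k=1}^∞ 1/f(2^k) < ∞. Then for every ε > 0 there exist ε₁ = ε₁(ε) > 0 and δ of the form 2^{−l} (l a positive integer) with Σ_{k=−log δ}^∞ 2^{−k/2} ≤ ε₁/8, such that with I_{N+log δ} = {v = (v₁,…,v_{N+log δ}) ∈ ℤ₊^{N+log δ} : Σ_{k=1}^{N+log δ} 2^{−v_k} ≥ ε₁} and A(v) = ⋂_{k=1}^{N+log δ} B_k(v_k), one has P(⋃_{v ∈ I_{N+log δ}} A(v)) ≤ e^{−C·2^{2N}} for some constant C = C(ε) > 0 not depending on N (for all N sufficiently large). -/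

import Mathlib

/-!
The shells `T_k` of edges of Model 1 (`d = 1`): `T_k` is a finite set of edges
with `|T_k| ≤ 2^{2k+1}`, pairwise disjoint; the weights `{X_e}` are i.i.d.
mean-zero with negative-part tail `P(X_e⁻ > x) = e^{-x² f(x)}` for `x ≥ M₀`.
`V_k^- = Σ_{e ∈ T_k} X_e^-` and `B_k(v) = {2^{-k} V_k^- ∈ [2^{N-v}, 2^{N-v+1})}`.
With `δ = 2^{-l}`, a vector `v = (v_1, …, v_{N + log₂ δ})` of nonnegative
integers (indexed here by `Fin (N - l)`, entry `k` standing for `v_{k+1}`)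
belongs to `I_{N + log₂ δ}` when `Σ_k 2^{-v_k} ≥ ε₁`, and
`A(v) = ⋂_{k=1}^{N + log₂ δ} B_k(v_k)`.
-/

open MeasureTheory ProbabilityTheory Filter

namespace Stmt18

/-- `V_k^- = Σ_{e ∈ T_k} X_e^-`. -/
noncomputable def Vneg {E : Type} (T : ℕ → Finset E) (X : E → Ω → ℝ) (k : ℕ) (ω : Ω) : ℝ :=
  ∑ e ∈ T k, max (-(X e ω)) 0

/-- The event `B_k(v) = {2^{-k} V_k^- ∈ [2^{N-v}, 2^{N-v+1})}`. -/
def Bevent {E : Type} (T : ℕ → Finset E) (X : E → Ω → ℝ) (N k v : ℕ) : Set Ω :=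
  {ω | (2 : ℝ) ^ (-(k : ℤ)) * Vneg T X k ω ∈
    Set.Ico ((2 : ℝ) ^ ((N : ℤ) - (v : ℤ))) ((2 : ℝ) ^ ((N : ℤ) - (v : ℤ) + 1))}

/-- The union `⋃_{v ∈ I_{N+log δ}} A(v)`: for some vector
`v : Fin (N - l) → ℕ` with `Σ_k 2^{-v_k} ≥ ε₁`, all the events
`B_k(v_k)`, `k = 1, …, N - l`, occur. -/
def AunionEvent {E : Type} (T : ℕ → Finset E) (X : E → Ω → ℝ)
    (N l : ℕ) (ε₁ : ℝ) : Set Ω :=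
  {ω | ∃ v : Fin (N - l) → ℕ,
    ε₁ ≤ ∑ k, (2 : ℝ) ^ (-(v k : ℤ)) ∧
    ∀ k : Fin (N - l), ω ∈ Bevent T X N (k.1 + 1) (v k)}

end Stmt18

open Stmt18

/-!
Exponential Chebyshev with `l = 1`. On the event, the weighted shell sum
`W = Σ_{k=1}^{N-1} 2^{N-k} V_k⁻` is at least `ε₁ 4^N`. The shells are disjoint and the weights
independent, so `E e^W` factors into moment generating functions `E exp (2^m X_e⁻)`, `m = N - k`.
Cutting the tail `e^{-x² f(x)}` at `x ≈ 2^{m/2} + 2^m / f(2^{m/2})` bounds each of them by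
`exp (4^m ρ(m))` with `ρ(m) ≈ 2^{-m/2} + 1/f(2^{m/2})`, which is summable since
`Σ 1/f(2^k) < ∞`. As `|T_k| ≤ 2·4^k`, `log E e^W ≤ K 4^N` with `K = 2 Σ ρ`, so `ε₁ = K + 24`
leaves probability at most `e^{-24·4^N}`.
-/

open Finset

lemma exp_neg_natCast_le_half_pow (j : ℕ) : Real.exp (-j) ≤ (1 / 2) ^ j := by
  have h2e : 2 ≤ Real.exp 1 := by linarith [Real.add_one_le_exp 1]
  have hinv : Real.exp (-1) ≤ 1 / 2 := by
    rw [Real.exp_neg, one_div]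
    exact inv_anti₀ two_pos h2e
  calc Real.exp (-j) = Real.exp (-1) ^ j := by rw [← Real.exp_nat_mul]; ring_nf
    _ ≤ (1 / 2) ^ j := pow_le_pow_left₀ (Real.exp_nonneg _) hinv j

lemma ofReal_exp_mul_le_add_tsum_indicator {t : ℝ} (ht : 0 ≤ t) (A y : ℝ) :
    ENNReal.ofReal (Real.exp (t * y)) ≤ ENNReal.ofReal (Real.exp (t * A)) +
      ∑' j : ℕ, {z : ℝ | A + j < z}.indicator
        (fun _ => ENNReal.ofReal (Real.exp (t * (A + j + 1)))) y := by
  rcases le_or_gt y A with hyA | hAy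
  · exact le_add_right (ENNReal.ofReal_le_ofReal (Real.exp_le_exp.2 (by nlinarith)))
  -- `y` lies in the unit interval `(A + j, A + j + 1]` with `j + 1 = ⌈y - A⌉₊`.
  have hc : 0 < ⌈y - A⌉₊ := Nat.ceil_pos.2 (by linarith)
  set j := ⌈y - A⌉₊ - 1
  have hj : (j : ℝ) + 1 = ⌈y - A⌉₊ := by rw [← Nat.cast_succ]; congr 1; omega
  have hlow : A + j < y := by linarith [Nat.ceil_lt_add_one (sub_nonneg.2 hAy.le)]
  have hup : y ≤ A + j + 1 := by linarith [Nat.le_ceil (y - A)]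
  calc ENNReal.ofReal (Real.exp (t * y))
      ≤ ENNReal.ofReal (Real.exp (t * (A + j + 1))) :=
        ENNReal.ofReal_le_ofReal (Real.exp_le_exp.2 (by nlinarith))
    _ = {z : ℝ | A + j < z}.indicator
          (fun _ => ENNReal.ofReal (Real.exp (t * (A + j + 1)))) y :=
        by rw [Set.indicator_of_mem (show y ∈ {z : ℝ | A + j < z} from hlow)]
    _ ≤ _ := ENNReal.le_tsum (f := fun j : ℕ => {z : ℝ | A + j < z}.indicator
          (fun _ => ENNReal.ofReal (Real.exp (t * (A + j + 1)))) y) j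
    _ ≤ _ := le_add_self

section Tails

variable {Ω : Type*} [MeasurableSpace Ω] {P : Measure Ω} {Y : Ω → ℝ}

lemma ofReal_exp_mul_measure_lt_le {t A : ℝ} (hA : 0 ≤ A)
    (htail : ∀ x, A ≤ x → P {ω | x < Y ω} ≤ ENNReal.ofReal (Real.exp (-((t + 1) * x))))
    (j : ℕ) :
    ENNReal.ofReal (Real.exp (t * (A + j + 1))) * P {ω | A + j < Y ω}
      ≤ ENNReal.ofReal (Real.exp t * (1 / 2) ^ j) := by
  have hj : (0 : ℝ) ≤ j := j.cast_nonneg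
  calc ENNReal.ofReal (Real.exp (t * (A + j + 1))) * P {ω | A + j < Y ω}
      ≤ ENNReal.ofReal (Real.exp (t * (A + j + 1))) *
          ENNReal.ofReal (Real.exp (-((t + 1) * (A + j)))) := by
        gcongr; exact htail _ (by linarith)
    _ = ENNReal.ofReal (Real.exp t * Real.exp (-j) * Real.exp (-A)) := by
        rw [← ENNReal.ofReal_mul (Real.exp_nonneg _), ← Real.exp_add, ← Real.exp_add,
          ← Real.exp_add]
        ring_nf
    _ ≤ ENNReal.ofReal (Real.exp t * (1 / 2) ^ j) := by
        apply ENNReal.ofReal_le_ofReal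
        calc Real.exp t * Real.exp (-j) * Real.exp (-A) ≤ Real.exp t * Real.exp (-j) * 1 := by
              gcongr; exact Real.exp_le_one_iff.2 (by linarith)
          _ ≤ Real.exp t * (1 / 2) ^ j := by
              rw [mul_one]; gcongr; exact exp_neg_natCast_le_half_pow j

lemma lintegral_exp_mul_le_of_tail [IsProbabilityMeasure P] (hY : Measurable Y) {t A : ℝ}
    (ht : 0 ≤ t) (hA : 0 ≤ A)
    (htail : ∀ x, A ≤ x → P {ω | x < Y ω} ≤ ENNReal.ofReal (Real.exp (-((t + 1) * x)))) :
    ∫⁻ ω, ENNReal.ofReal (Real.exp (t * Y ω)) ∂P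
      ≤ ENNReal.ofReal (Real.exp (t * (A + 1) + 2)) := by
  calc ∫⁻ ω, ENNReal.ofReal (Real.exp (t * Y ω)) ∂P
      ≤ ∫⁻ ω, (ENNReal.ofReal (Real.exp (t * A)) + ∑' j : ℕ, {z : ℝ | A + j < z}.indicator
          (fun _ => ENNReal.ofReal (Real.exp (t * (A + j + 1)))) (Y ω)) ∂P :=
        lintegral_mono fun ω => ofReal_exp_mul_le_add_tsum_indicator ht A (Y ω)
    _ = ENNReal.ofReal (Real.exp (t * A)) +
          ∑' j : ℕ, ENNReal.ofReal (Real.exp (t * (A + j + 1))) * P {ω | A + j < Y ω} := by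
        have hEj : ∀ j : ℕ, MeasurableSet {z : ℝ | A + j < z} :=
          fun j => measurableSet_lt measurable_const measurable_id
        rw [lintegral_add_left measurable_const, lintegral_const, measure_univ, mul_one,
          lintegral_tsum fun j => ?_]
        · exact congrArg _ (tsum_congr fun j => lintegral_indicator_const_comp hY (hEj j) _)
        · exact ((measurable_const.indicator (hEj j)).comp hY).aemeasurable
    _ ≤ ENNReal.ofReal (Real.exp (t * A)) +
          ∑' j : ℕ, ENNReal.ofReal (Real.exp t * (1 / 2) ^ j) := by
        gcongr with j; exact ofReal_exp_mul_measure_lt_le hA htail j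
    _ = ENNReal.ofReal (Real.exp (t * A) + Real.exp t * 2) := by
        rw [← ENNReal.ofReal_tsum_of_nonneg (fun j => by positivity)
            (summable_geometric_two.mul_left _), tsum_mul_left, tsum_geometric_two,
          ENNReal.ofReal_add (Real.exp_nonneg _) (by positivity)]
    _ ≤ ENNReal.ofReal (Real.exp (t * (A + 1) + 2)) := by
        gcongr
        have h1 : Real.exp (t * A) ≤ Real.exp (t * (A + 1)) := Real.exp_le_exp.2 (by nlinarith)
        have h2 : Real.exp t ≤ Real.exp (t * (A + 1)) := Real.exp_le_exp.2 (by nlinarith)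
        have h3 : 3 ≤ Real.exp 2 := by linarith [Real.add_one_le_exp 2]
        rw [Real.exp_add]
        nlinarith [Real.exp_pos (t * (A + 1))]

end Tails

lemma mul_le_sq_mul_of_add_div_le {f : ℝ → ℝ} (hfpos : ∀ x, 0 < f x) (hfmono : Monotone f)
    {c s x : ℝ} (hc : 0 ≤ c) (hs : 0 ≤ s) (hx : s + c / f s ≤ x) : c * x ≤ x ^ 2 * f x := by
  have hcs : 0 ≤ c / f s := div_nonneg hc (hfpos s).le
  have hc_le : c ≤ x * f x :=
    calc c = c / f s * f s := (div_mul_cancel₀ c (hfpos s).ne').symm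
      _ ≤ x * f x := mul_le_mul (by linarith) (hfmono (by linarith)) (hfpos s).le (by linarith)
  nlinarith

/-- For a tail `e^{-x² f(x)}`, `4^m · shellRate M₀ f m` bounds `log E exp (2^m Y)`; the cut-off
`2^{m/2}` in the threshold balances its two middle terms. -/
noncomputable def shellRate (M₀ : ℝ) (f : ℝ → ℝ) (m : ℕ) : ℝ :=
  (M₀ + 3) * (1 / 2) ^ m + (1 / 2) ^ (m / 2) + 2 / f (2 ^ (m / 2))

lemma two_pow_mul_threshold_le_four_pow_mul_shellRate (M₀ : ℝ) {f : ℝ → ℝ}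
    (hfpos : ∀ x, 0 < f x) (m : ℕ) :
    2 ^ m * (M₀ + 2 ^ (m / 2) + (2 ^ m + 1) / f (2 ^ (m / 2)) + 1) + 2
      ≤ 4 ^ m * shellRate M₀ f m := by
  set a : ℝ := 2 ^ (m / 2)
  set b : ℝ := 2 ^ m
  set F := f a
  have ha : 0 < a := by positivity
  have hb : 1 ≤ b := one_le_pow₀ one_le_two
  have hab : a ^ 2 ≤ b := by
    rw [← pow_mul]; exact pow_le_pow_right₀ one_le_two (by omega)
  have hF : 0 < F := hfpos a
  have h4 : (4 : ℝ) ^ m = b ^ 2 := by rw [← pow_mul, mul_comm, pow_mul]; norm_num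
  have hhalf (n : ℕ) : ((1 : ℝ) / 2) ^ n = 1 / 2 ^ n := by rw [one_div_pow]
  rw [h4, shellRate, hhalf, hhalf, mul_one_div]
  have e1 : b * ((b + 1) / F) ≤ b ^ 2 * (2 / F) := by
    rw [mul_div_assoc', mul_div_assoc', div_le_div_iff_of_pos_right hF]; nlinarith
  have e2 : b * a ≤ b ^ 2 * (1 / a) := by
    rw [mul_one_div, le_div_iff₀ ha]; nlinarith
  have e3 : b ^ 2 * ((M₀ + 3) / b) = b * (M₀ + 3) := by field_simp
  nlinarith

lemma summable_comp_div_two {g : ℕ → ℝ} (hg : Summable g) : Summable fun m => g (m / 2) := by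
  apply Summable.even_add_odd <;> simpa [Nat.mul_div_cancel_left, Nat.mul_add_div] using hg

lemma summable_shellRate (M₀ : ℝ) {f : ℝ → ℝ} (hsum : Summable fun k : ℕ => 1 / f (2 ^ k)) :
    Summable (shellRate M₀ f) :=
  ((summable_geometric_two.mul_left _).add (summable_comp_div_two summable_geometric_two)).add
    (summable_comp_div_two ((hsum.mul_left 2).congr fun _ => mul_one_div _ _))

lemma shellRate_nonneg {M₀ : ℝ} (hM₀ : 0 < M₀) {f : ℝ → ℝ} (hfpos : ∀ x, 0 < f x) (m : ℕ) :
    0 ≤ shellRate M₀ f m :=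
  add_nonneg (by positivity) (div_nonneg zero_le_two (hfpos _).le)

lemma lintegral_exp_two_pow_mul_le {Ω : Type*} [MeasurableSpace Ω] {P : Measure Ω}
    [IsProbabilityMeasure P] {Y : Ω → ℝ} (hY : Measurable Y) {M₀ : ℝ} (hM₀ : 0 < M₀)
    {f : ℝ → ℝ} (hfpos : ∀ x, 0 < f x) (hfmono : Monotone f)
    (htail : ∀ x, M₀ ≤ x → P {ω | x < Y ω} ≤ ENNReal.ofReal (Real.exp (-(x ^ 2 * f x))))
    (m : ℕ) :
    ∫⁻ ω, ENNReal.ofReal (Real.exp (2 ^ m * Y ω)) ∂P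
      ≤ ENNReal.ofReal (Real.exp (4 ^ m * shellRate M₀ f m)) := by
  set a : ℝ := 2 ^ (m / 2)
  set b : ℝ := 2 ^ m
  have ha : 0 ≤ a := by positivity
  have hb : 0 ≤ b := by positivity
  have hc : 0 ≤ (b + 1) / f a := div_nonneg (by linarith) (hfpos a).le
  -- Beyond this threshold `x f x ≥ b + 1`, so the tail is below `exp (-(b + 1) x)`.
  refine (lintegral_exp_mul_le_of_tail hY (A := M₀ + a + (b + 1) / f a) hb (by linarith)
    fun x hx => ?_).trans ?_
  · refine (htail x (by linarith)).trans (ENNReal.ofReal_le_ofReal (Real.exp_le_exp.2 ?_))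
    linarith [mul_le_sq_mul_of_add_div_le hfpos hfmono (c := b + 1) (by linarith) ha
      (by linarith : a + (b + 1) / f a ≤ x)]
  · exact ENNReal.ofReal_le_ofReal (Real.exp_le_exp.2
      (two_pow_mul_threshold_le_four_pow_mul_shellRate M₀ hfpos m))

section Chernoff

variable {Ω : Type*} [MeasurableSpace Ω] {P : Measure Ω}

lemma measure_le_le_of_lintegral_exp_le {W : Ω → ℝ} (hW : Measurable W) {a b : ℝ}
    (h : ∫⁻ ω, ENNReal.ofReal (Real.exp (W ω)) ∂P ≤ ENNReal.ofReal (Real.exp b)) :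
    P {ω | a ≤ W ω} ≤ ENNReal.ofReal (Real.exp (b - a)) := by
  have hpos : ENNReal.ofReal (Real.exp a) ≠ 0 := (ENNReal.ofReal_pos.2 (Real.exp_pos a)).ne'
  have hsub : {ω | a ≤ W ω} ⊆
      {ω | ENNReal.ofReal (Real.exp a) ≤ ENNReal.ofReal (Real.exp (W ω))} :=
    fun ω hω => ENNReal.ofReal_le_ofReal (Real.exp_le_exp.2 hω)
  rw [← ENNReal.mul_le_mul_iff_right hpos ENNReal.ofReal_ne_top,
    ← ENNReal.ofReal_mul (Real.exp_nonneg _), ← Real.exp_add, add_sub_cancel]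
  calc ENNReal.ofReal (Real.exp a) * P {ω | a ≤ W ω}
      ≤ ENNReal.ofReal (Real.exp a) *
          P {ω | ENNReal.ofReal (Real.exp a) ≤ ENNReal.ofReal (Real.exp (W ω))} := by
        gcongr
    _ ≤ ∫⁻ ω, ENNReal.ofReal (Real.exp (W ω)) ∂P :=
        mul_meas_ge_le_lintegral₀ hW.exp.ennreal_ofReal.aemeasurable _
    _ ≤ ENNReal.ofReal (Real.exp b) := h

variable {E : Type*} {Y : E → Ω → ℝ}

lemma lintegral_exp_sum_le_of_iIndepFun (hY : ∀ e, Measurable (Y e)) (hindep : iIndepFun Y P)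
    (U : Finset E) (w ψ : E → ℝ)
    (h : ∀ e ∈ U, ∫⁻ ω, ENNReal.ofReal (Real.exp (w e * Y e ω)) ∂P
      ≤ ENNReal.ofReal (Real.exp (ψ e))) :
    ∫⁻ ω, ENNReal.ofReal (Real.exp (∑ e ∈ U, w e * Y e ω)) ∂P
      ≤ ENNReal.ofReal (Real.exp (∑ e ∈ U, ψ e)) := by
  have hg : ∀ e, Measurable fun x : ℝ => ENNReal.ofReal (Real.exp (w e * x)) :=
    fun e => (measurable_const_mul _).exp.ennreal_ofReal
  calc ∫⁻ ω, ENNReal.ofReal (Real.exp (∑ e ∈ U, w e * Y e ω)) ∂P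
      = ∫⁻ ω, ∏ e ∈ U, ENNReal.ofReal (Real.exp (w e * Y e ω)) ∂P := by
        simp_rw [Real.exp_sum, ENNReal.ofReal_prod_of_nonneg fun _ _ => Real.exp_nonneg _]
    _ = ∏ e ∈ U, ∫⁻ ω, ENNReal.ofReal (Real.exp (w e * Y e ω)) ∂P :=
        lintegral_prod_eq_prod_lintegral_of_indepFun U _ (hindep.comp _ hg)
          fun e => (hg e).comp (hY e)
    _ ≤ ∏ e ∈ U, ENNReal.ofReal (Real.exp (ψ e)) := prod_le_prod' h
    _ = ENNReal.ofReal (Real.exp (∑ e ∈ U, ψ e)) := by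
        rw [Real.exp_sum, ENNReal.ofReal_prod_of_nonneg fun _ _ => Real.exp_nonneg _]

lemma sum_ite_mem_eq_of_pairwiseDisjoint {ι : Type*} [DecidableEq E] {s : Finset ι}
    {T : ι → Finset E} (hT : (s : Set ι).PairwiseDisjoint T) (g : ι → ℝ) {i : ι} (hi : i ∈ s)
    {e : E} (he : e ∈ T i) : ∑ j ∈ s, (if e ∈ T j then g j else 0) = g i := by
  rw [sum_eq_single_of_mem i hi fun j hj hji => if_neg fun hej =>
    disjoint_left.1 (hT hj hi hji) hej he, if_pos he]

lemma lintegral_exp_sum_shells_le (hY : ∀ e, Measurable (Y e)) (hindep : iIndepFun Y P)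
    {ι : Type*} (s : Finset ι) (T : ι → Finset E) (hT : (s : Set ι).PairwiseDisjoint T)
    (t φ : ι → ℝ)
    (h : ∀ i ∈ s, ∀ e ∈ T i, ∫⁻ ω, ENNReal.ofReal (Real.exp (t i * Y e ω)) ∂P
      ≤ ENNReal.ofReal (Real.exp (φ i))) :
    ∫⁻ ω, ENNReal.ofReal (Real.exp (∑ i ∈ s, t i * ∑ e ∈ T i, Y e ω)) ∂P
      ≤ ENNReal.ofReal (Real.exp (∑ i ∈ s, #(T i) * φ i)) := by
  classical
  -- On `⋃ T i`, the shell weights define a function of the variable's index.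
  let shellValue (g : ι → ℝ) (e : E) : ℝ := ∑ j ∈ s, if e ∈ T j then g j else 0
  have hval (g : ι → ℝ) {i : ι} (hi : i ∈ s) {e : E} (he : e ∈ T i) : shellValue g e = g i :=
    sum_ite_mem_eq_of_pairwiseDisjoint hT g hi he
  have hW (ω : Ω) : ∑ i ∈ s, t i * ∑ e ∈ T i, Y e ω
      = ∑ e ∈ s.biUnion T, shellValue t e * Y e ω := by
    rw [sum_biUnion hT]
    refine sum_congr rfl fun i hi => ?_
    rw [mul_sum]
    exact sum_congr rfl fun e he => by rw [hval t hi he]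
  have hΦ : ∑ i ∈ s, #(T i) * φ i = ∑ e ∈ s.biUnion T, shellValue φ e := by
    rw [sum_biUnion hT]
    refine sum_congr rfl fun i hi => ?_
    rw [sum_congr rfl fun e he => hval φ hi he, sum_const, nsmul_eq_mul]
  simp only [hW, hΦ]
  refine lintegral_exp_sum_le_of_iIndepFun hY hindep _ _ _ fun e he => ?_
  obtain ⟨i, hi, hei⟩ := mem_biUnion.1 he
  rw [hval t hi hei, hval φ hi hei]
  exact h i hi e hei

end Chernoff

lemma AunionEvent_subset {Ω : Type*} {E : Type} (T : ℕ → Finset E) (X : E → Ω → ℝ)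
    (N l : ℕ) (ε₁ : ℝ) :
    AunionEvent T X N l ε₁ ⊆
      {ω | ε₁ * 4 ^ N ≤ ∑ k ∈ range (N - l), 2 ^ (N - (k + 1)) * Vneg T X (k + 1) ω} := by
  rintro ω ⟨v, hv, hB⟩
  have hshell (k : Fin (N - l)) :
      (4 : ℝ) ^ N * 2 ^ (-(v k : ℤ)) ≤ 2 ^ (N - (k.1 + 1)) * Vneg T X (k.1 + 1) ω := by
    have hk : k.1 + 1 ≤ N := by omega
    have h4 : (4 : ℝ) ^ N * 2 ^ (-(v k : ℤ)) = 2 ^ N * 2 ^ ((N : ℤ) - v k) := by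
      rw [sub_eq_add_neg, zpow_add₀ two_ne_zero, zpow_natCast, ← mul_assoc, ← mul_pow]
      norm_num
    have h2 : (2 : ℝ) ^ N * 2 ^ (-((k.1 + 1 : ℕ) : ℤ)) = 2 ^ (N - (k.1 + 1)) := by
      rw [← zpow_natCast, ← zpow_add₀ two_ne_zero, ← zpow_natCast, Nat.cast_sub hk]
      ring_nf
    rw [h4, ← h2, mul_assoc]
    exact mul_le_mul_of_nonneg_left (hB k).1 (by positivity)
  calc ε₁ * 4 ^ N ≤ (∑ k, (2 : ℝ) ^ (-(v k : ℤ))) * 4 ^ N := by gcongr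
    _ = ∑ k, (4 : ℝ) ^ N * 2 ^ (-(v k : ℤ)) := by rw [sum_mul]; simp_rw [mul_comm]
    _ ≤ ∑ k : Fin (N - l), 2 ^ (N - (k.1 + 1)) * Vneg T X (k.1 + 1) ω :=
        sum_le_sum fun k _ => hshell k
    _ = _ := Fin.sum_univ_eq_sum_range
        (fun k : ℕ => (2 : ℝ) ^ (N - (k + 1)) * Vneg T X (k + 1) ω) _

lemma sum_card_mul_shellRate_le {E : Type*} {T : ℕ → Finset E}
    (hcard : ∀ k, #(T k) ≤ 2 ^ (2 * k + 1)) {M₀ : ℝ} (hM₀ : 0 < M₀) {f : ℝ → ℝ}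
    (hfpos : ∀ x, 0 < f x) (hsum : Summable fun k : ℕ => 1 / f (2 ^ k)) {n N : ℕ} (hn : n ≤ N) :
    ∑ k ∈ range n, #(T (k + 1)) * (4 ^ (N - (k + 1)) * shellRate M₀ f (N - (k + 1)))
      ≤ (2 * ∑' m, shellRate M₀ f m) * 4 ^ N := by
  have hρ := shellRate_nonneg hM₀ hfpos
  calc ∑ k ∈ range n, #(T (k + 1)) * (4 ^ (N - (k + 1)) * shellRate M₀ f (N - (k + 1)))
      ≤ ∑ k ∈ range n, 2 * 4 ^ N * shellRate M₀ f (N - (k + 1)) := by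
        refine sum_le_sum fun k hk => ?_
        have hkN : k + 1 ≤ N := by rw [mem_range] at hk; omega
        have hc : (#(T (k + 1)) : ℝ) ≤ 2 * 4 ^ (k + 1) := by
          exact_mod_cast (hcard (k + 1)).trans_eq (by rw [pow_succ, pow_mul]; ring)
        calc (#(T (k + 1)) : ℝ) * (4 ^ (N - (k + 1)) * shellRate M₀ f (N - (k + 1)))
            ≤ 2 * 4 ^ (k + 1) * (4 ^ (N - (k + 1)) * shellRate M₀ f (N - (k + 1))) :=
              mul_le_mul_of_nonneg_right hc (mul_nonneg (by positivity) (hρ _))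
          _ = 2 * 4 ^ N * shellRate M₀ f (N - (k + 1)) := by
              rw [← Nat.add_sub_cancel' hkN, pow_add]; simp only [Nat.add_sub_cancel_left]; ring
    _ = 2 * 4 ^ N * ∑ k ∈ range n, shellRate M₀ f (N - (k + 1)) := by rw [mul_sum]
    _ ≤ 2 * 4 ^ N * ∑' m, shellRate M₀ f m := by
        gcongr
        have hinj : Set.InjOn (fun k => N - (k + 1)) (range n) := fun a ha b hb hab => by
          simp only [coe_range, Set.mem_Iio] at ha hb hab; omega
        rw [← sum_image hinj]
        exact (summable_shellRate M₀ hsum).sum_le_tsum _ fun m _ => hρ m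
    _ = (2 * ∑' m, shellRate M₀ f m) * 4 ^ N := by ring

lemma tsum_two_rpow_neg_succ_div_two_le :
    ∑' k : ℕ, (2 : ℝ) ^ (-(((1 + k : ℕ) : ℝ)) / 2) ≤ 3 := by
  set r : ℝ := 2 ^ (-(1 : ℝ) / 2)
  have hr0 : 0 ≤ r := Real.rpow_nonneg zero_le_two _
  have hrr : r * r = 1 / 2 := by
    rw [← Real.rpow_add two_pos]; norm_num
  have hr : r ≤ 3 / 4 := by nlinarith
  have hterm (k : ℕ) : (2 : ℝ) ^ (-(((1 + k : ℕ) : ℝ)) / 2) = r * r ^ k := by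
    rw [← pow_succ', ← Real.rpow_natCast, ← Real.rpow_mul zero_le_two]
    congr 1; push_cast; ring
  rw [tsum_congr hterm, tsum_mul_left, tsum_geometric_of_lt_one hr0 (by linarith),
    ← div_eq_mul_inv, div_le_iff₀ (by linarith)]
  linarith

theorem stmt_18_general
    {Ω : Type} [MeasurableSpace Ω] (P : Measure Ω) [IsProbabilityMeasure P]
    {E : Type} (T : ℕ → Finset E)
    (hcard : ∀ k, (T k).card ≤ 2 ^ (2 * k + 1))
    (hdisj : ∀ k k', k ≠ k' → Disjoint (T k) (T k'))
    (X : E → Ω → ℝ)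
    (hmeas : ∀ e, Measurable (X e))
    (hindep : iIndepFun X P)
    (M₀ : ℝ) (hM₀ : 0 < M₀)
    (f : ℝ → ℝ) (hfpos : ∀ x, 0 < f x) (hfmono : Monotone f)
    (htail : ∀ e, ∀ x : ℝ, M₀ ≤ x →
      (P {ω | x < max (-(X e ω)) 0}).toReal = Real.exp (-(x ^ 2 * f x)))
    (hsum : Summable (fun k : ℕ => 1 / f (2 ^ k))) :
    ∀ ε : ℝ, 0 < ε →
      ∃ ε₁ : ℝ, 0 < ε₁ ∧
      ∃ l : ℕ, 1 ≤ l ∧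
        (∑' k : ℕ, (2 : ℝ) ^ (-(((l + k : ℕ) : ℝ)) / 2)) ≤ ε₁ / 8 ∧
        ∃ C > (0 : ℝ), ∃ N₀ : ℕ, ∀ N : ℕ, N₀ ≤ N →
          (P (AunionEvent T X N l ε₁)).toReal ≤ Real.exp (-(C * 2 ^ (2 * N))) := by
  intro _ _
  set K := 2 * ∑' m, shellRate M₀ f m
  have hK : 0 ≤ K := mul_nonneg zero_le_two (tsum_nonneg (shellRate_nonneg hM₀ hfpos))
  refine ⟨K + 24, by positivity, 1, le_rfl, ?_, 24, by norm_num, 0, fun N _ => ?_⟩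
  · linarith [tsum_two_rpow_neg_succ_div_two_le]
  set Y : E → Ω → ℝ := fun e ω => max (-(X e ω)) 0
  have hY (e : E) : Measurable (Y e) := (hmeas e).neg.max measurable_const
  have hshell (e : E) (m : ℕ) : ∫⁻ ω, ENNReal.ofReal (Real.exp (2 ^ m * Y e ω)) ∂P
      ≤ ENNReal.ofReal (Real.exp (4 ^ m * shellRate M₀ f m)) :=
    lintegral_exp_two_pow_mul_le (hY e) hM₀ hfpos hfmono (fun x hx =>
      (ENNReal.ofReal_toReal (measure_ne_top P _)).symm.trans_le
        (ENNReal.ofReal_le_ofReal (htail e x hx).le)) m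
  have hmgf : ∫⁻ ω, ENNReal.ofReal (Real.exp
        (∑ k ∈ range (N - 1), 2 ^ (N - (k + 1)) * Vneg T X (k + 1) ω)) ∂P
      ≤ ENNReal.ofReal (Real.exp (K * 4 ^ N)) :=
    (lintegral_exp_sum_shells_le hY (hindep.comp _ fun _ => measurable_neg.max measurable_const)
      (range (N - 1)) (fun k => T (k + 1)) (fun a _ b _ hab => hdisj _ _ (by omega))
      _ _ fun k _ e _ => hshell e (N - (k + 1))).trans
    (ENNReal.ofReal_le_ofReal (Real.exp_le_exp.2
      (sum_card_mul_shellRate_le hcard hM₀ hfpos hsum (Nat.sub_le N 1))))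
  refine ENNReal.toReal_le_of_le_ofReal (Real.exp_nonneg _) ?_
  calc P (AunionEvent T X N 1 (K + 24))
      ≤ P {ω | (K + 24) * 4 ^ N ≤
          ∑ k ∈ range (N - 1), 2 ^ (N - (k + 1)) * Vneg T X (k + 1) ω} :=
        measure_mono (AunionEvent_subset T X N 1 _)
    _ ≤ ENNReal.ofReal (Real.exp (K * 4 ^ N - (K + 24) * 4 ^ N)) :=
        measure_le_le_of_lintegral_exp_le (by simp only [Vneg]; fun_prop) hmgf
    _ = ENNReal.ofReal (Real.exp (-(24 * 2 ^ (2 * N)))) := by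
        congr 2; rw [pow_mul]; ring

/-- Proposition 4.1, claim 1.  Assume the negative-part
tail `P(X_e⁻ > x) = e^{-x² f(x)}` for `x ≥ M₀` with `f` positive increasing,
and `Σ_k 1/f(2^k) < ∞`.  Then for every `ε > 0` there are `ε₁ = ε₁(ε) > 0` and
`δ = 2^{-l}` with `Σ_{k=-log₂ δ}^∞ 2^{-k/2} ≤ ε₁/8`, such that
`P(⋃_{v ∈ I_{N+log₂ δ}} A(v)) ≤ e^{-C 2^{2N}}` for some `C = C(ε) > 0` not
depending on `N`, for all `N` sufficiently large. -/
theorem stmt_18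
    {Ω : Type} [MeasurableSpace Ω] (P : Measure Ω) [IsProbabilityMeasure P]
    {E : Type} (T : ℕ → Finset E)
    (hcard : ∀ k, (T k).card ≤ 2 ^ (2 * k + 1))
    (hdisj : ∀ k k', k ≠ k' → Disjoint (T k) (T k'))
    (X : E → Ω → ℝ)
    (hmeas : ∀ e, Measurable (X e))
    (hindep : iIndepFun X P)
    (hident : ∀ e e', Measure.map (X e) P = Measure.map (X e') P)
    (hmean : ∀ e, ∫ ω, X e ω ∂P = 0)
    (M₀ : ℝ) (hM₀ : 0 < M₀)
    (f : ℝ → ℝ) (hfpos : ∀ x, 0 < f x) (hfmono : Monotone f)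
    (htail : ∀ e, ∀ x : ℝ, M₀ ≤ x →
      (P {ω | x < max (-(X e ω)) 0}).toReal = Real.exp (-(x ^ 2 * f x)))
    (hsum : Summable (fun k : ℕ => 1 / f (2 ^ k))) :
    ∀ ε : ℝ, 0 < ε →
      ∃ ε₁ : ℝ, 0 < ε₁ ∧
      ∃ l : ℕ, 1 ≤ l ∧
        (∑' k : ℕ, (2 : ℝ) ^ (-(((l + k : ℕ) : ℝ)) / 2)) ≤ ε₁ / 8 ∧
        ∃ C > (0 : ℝ), ∃ N₀ : ℕ, ∀ N : ℕ, N₀ ≤ N →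
          (P (AunionEvent T X N l ε₁)).toReal ≤ Real.exp (-(C * 2 ^ (2 * N))) :=
  stmt_18_general P T hcard hdisj X hmeas hindep M₀ hM₀ f hfpos hfmono htail hsum
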